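/- arXiv:2602.16208 — 5 statements merged into one kernel-verified Lean document; each statement's English description precedes it below -/
import Mathlib

section
/- If f belongs to the class S*_B, then the second Taylor coefficient of f satisfies |a_2| ≤ 1. -/
open Complex Metric

/-- The `n`-th Taylor coefficient of `f` at `0`. -/
noncomputable def taylorCoeff (f : ℂ → ℂ) (n : ℕ) : ℂ :=
  iteratedDeriv n f 0 / n.factorial

/-- Membership in the class `S*_B`: `f` is analytic on the unit disk, normalized by
`f(0) = 0` and `f'(0) = 1`, and there is a Schwarz function `w` with
`z f'(z) (1 - log(1 + w z)) = f z` on the unit disk. -/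
def IsSB (f : ℂ → ℂ) : Prop :=
  DifferentiableOn ℂ f (ball (0:ℂ) 1) ∧ f 0 = 0 ∧ deriv f 0 = 1 ∧
  ∃ w : ℂ → ℂ, DifferentiableOn ℂ w (ball (0:ℂ) 1) ∧ w 0 = 0 ∧
    (∀ z ∈ ball (0:ℂ) 1, ‖w z‖ < 1) ∧
    (∀ z ∈ ball (0:ℂ) 1, z * deriv f z * (1 - Complex.log (1 + w z)) = f z)

/-!
Writing `H z = 1 - log (1 + w z)`, the defining relation says `f z = z * (f' z * H z)` near `0`.
Differentiating twice at `0` gives `f''(0) = 2 (f''(0) H(0) + f'(0) H'(0)) = 2 f''(0) - 2 w'(0)`,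
so `a₂ = f''(0) / 2 = w'(0)`, and the Schwarz lemma bounds `‖w'(0)‖` by `1`.
-/

open Filter Topology

theorem deriv_deriv_id_mul {𝕜 : Type*} [NontriviallyNormedField 𝕜] [CompleteSpace 𝕜]
    {g : 𝕜 → 𝕜} {x : 𝕜} (hg : AnalyticAt 𝕜 g x) :
    deriv (deriv fun z => z * g z) x = 2 * deriv g x + x * deriv (deriv g) x := by
  have hderiv : deriv (fun z => z * g z) =ᶠ[𝓝 x] fun z => g z + z * deriv g z := by
    filter_upwards [hg.eventually_analyticAt] with z hz
    simpa using ((hasDerivAt_id' z).fun_mul hz.differentiableAt.hasDerivAt).deriv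
  rw [hderiv.deriv_eq, (hg.differentiableAt.hasDerivAt.fun_add
    ((hasDerivAt_id' x).fun_mul hg.deriv.differentiableAt.hasDerivAt)).deriv]
  ring

theorem taylorCoeff_two (f : ℂ → ℂ) : taylorCoeff f 2 = deriv (deriv f) 0 / 2 := by
  simp [taylorCoeff, iteratedDeriv_succ]

theorem deriv_deriv_zero_eq_two_mul_deriv {f w : ℂ → ℂ} (hf : AnalyticAt ℂ f 0)
    (hw : AnalyticAt ℂ w 0) (hw0 : w 0 = 0) (hf1 : deriv f 0 = 1)
    (heq : (fun z => z * deriv f z * (1 - log (1 + w z))) =ᶠ[𝓝 0] f) :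
    deriv (deriv f) 0 = 2 * deriv w 0 := by
  set H : ℂ → ℂ := fun z => 1 - log (1 + w z)
  have h1w : 1 + w 0 ∈ slitPlane := by simp [hw0]
  have hH : AnalyticAt ℂ H 0 := analyticAt_const.sub ((analyticAt_const.add hw).clog h1w)
  have hH' : HasDerivAt H (-deriv w 0) 0 := by
    simpa [hw0] using ((hw.differentiableAt.hasDerivAt.const_add 1).clog h1w).const_sub 1
  have hg : HasDerivAt (fun z => deriv f z * H z) (deriv (deriv f) 0 - deriv w 0) 0 := by
    simpa [hw0, H, hf1, sub_eq_add_neg] using hf.deriv.differentiableAt.hasDerivAt.fun_mul hH'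
  have key := deriv_deriv_id_mul (hf.deriv.fun_mul hH)
  simp only [zero_mul, add_zero, ← mul_assoc, hg.deriv] at key
  rw [heq.deriv.deriv_eq] at key
  linear_combination -key

theorem abs_a2_le_one (f : ℂ → ℂ) (hf : IsSB f) :
    ‖taylorCoeff f 2‖ ≤ 1 := by
  obtain ⟨hfd, -, hf1, w, hwd, hw0, hwlt, heq⟩ := hf
  have hball : ball (0 : ℂ) 1 ∈ 𝓝 0 := ball_mem_nhds 0 one_pos
  have hf'' : deriv (deriv f) 0 = 2 * deriv w 0 :=
    deriv_deriv_zero_eq_two_mul_deriv (hfd.analyticAt hball) (hwd.analyticAt hball) hw0 hf1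
      (eventually_of_mem hball heq)
  have hmaps : Set.MapsTo w (ball 0 1) (closedBall (w 0) 1) := fun z hz => by
    simpa [hw0] using (hwlt z hz).le
  rw [taylorCoeff_two, hf'', mul_div_cancel_left₀ _ two_ne_zero]
  exact norm_deriv_le_one_of_mapsTo_ball hwd hmaps one_pos
end

section
/- If f belongs to the class S*_B, then the third Taylor coefficient of f satisfies |a_3| ≤ 3/4. -/
open Complex Metric

/-! Write `w z = c₁ z + c₂ z² + ⋯`. Comparing the coefficients of `z²` and `z³` in
`f = z f' · (1 - log (1 + w))`, with `log (1 + w) = c₁ z + (c₂ - c₁² / 2) z² + ⋯`, gives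
`a₃ = (3 c₁² + 2 c₂) / 4`. The Schwarz–Pick inequality for `w z / z`, which maps the disk into
the closed disk, gives `|c₂| ≤ 1 - |c₁|²`, hence `|a₃| ≤ (2 + |c₁|²) / 4 ≤ 3 / 4`. -/

open Set Topology

section TaylorCoeff

variable {f g : ℂ → ℂ} {n : ℕ}

theorem taylorCoeff_zero : taylorCoeff f 0 = f 0 := by
  simp [taylorCoeff]

theorem taylorCoeff_one : taylorCoeff f 1 = deriv f 0 := by
  simp [taylorCoeff]

theorem taylorCoeff_deriv :
    taylorCoeff (deriv f) n = (n + 1) * taylorCoeff f (n + 1) := by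
  simp only [taylorCoeff, ← iteratedDeriv_succ', Nat.factorial_succ, Nat.cast_mul]
  field_simp
  push_cast
  ring

theorem Filter.EventuallyEq.taylorCoeff_eq (h : f =ᶠ[𝓝 0] g) (n : ℕ) :
    taylorCoeff f n = taylorCoeff g n := by
  rw [taylorCoeff, taylorCoeff, h.iteratedDeriv_eq]

theorem taylorCoeff_const_sub (hn : 0 < n) (c : ℂ) :
    taylorCoeff (fun z => c - f z) n = -taylorCoeff f n := by
  simp [taylorCoeff, iteratedDeriv_const_sub hn, neg_div]

theorem taylorCoeff_const_add (hn : 0 < n) (c : ℂ) :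
    taylorCoeff (fun z => c + f z) n = taylorCoeff f n := by
  simp [taylorCoeff, iteratedDeriv_const_add hn]

theorem taylorCoeff_mul (hf : ContDiffAt ℂ n f 0) (hg : ContDiffAt ℂ n g 0) :
    taylorCoeff (f * g) n =
      ∑ i ∈ Finset.range (n + 1), taylorCoeff f i * taylorCoeff g (n - i) := by
  rw [taylorCoeff, iteratedDeriv_mul hf hg, Finset.sum_div]
  refine Finset.sum_congr rfl fun i hi => ?_
  have hin : i ≤ n := Nat.lt_succ_iff.mp (Finset.mem_range.mp hi)
  have hchoose : (n.choose i : ℂ) * i.factorial * (n - i).factorial = n.factorial := by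
    exact_mod_cast Nat.choose_mul_factorial_mul_factorial hin
  have hchoose_ne : (n.choose i : ℂ) ≠ 0 := by exact_mod_cast (Nat.choose_pos hin).ne'
  rw [taylorCoeff, taylorCoeff, ← hchoose]
  field_simp

theorem taylorCoeff_id_mul (hg : ContDiffAt ℂ (n + 1) g 0) :
    taylorCoeff (fun z => z * g z) (n + 1) = taylorCoeff g n := by
  rw [show (fun z => z * g z) = (fun z : ℂ => z) * g from rfl,
    taylorCoeff_mul contDiffAt_fun_id hg, Finset.sum_eq_single 1]
  · simp [taylorCoeff_one]
  · intro i _ hi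
    simp [taylorCoeff, iteratedDeriv_fun_id_zero, hi]
  · simp

end TaylorCoeff

section SchwarzPick

open ComplexConjugate

theorem normSq_one_sub_conj_mul_sub_normSq_sub (a ζ : ℂ) :
    Complex.normSq (1 - conj a * ζ) - Complex.normSq (ζ - a) =
      (1 - Complex.normSq a) * (1 - Complex.normSq ζ) := by
  simp only [Complex.normSq_apply, Complex.sub_re, Complex.sub_im, Complex.mul_re,
    Complex.mul_im, Complex.one_re, Complex.one_im, Complex.conj_re, Complex.conj_im]
  ring

theorem norm_sub_le_norm_one_sub_conj_mul {a ζ : ℂ} (ha : ‖a‖ ≤ 1) (hζ : ‖ζ‖ ≤ 1) :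
    ‖ζ - a‖ ≤ ‖1 - conj a * ζ‖ := by
  have ha' : Complex.normSq a ≤ 1 := by rw [← Complex.sq_norm]; nlinarith [norm_nonneg a]
  have hζ' : Complex.normSq ζ ≤ 1 := by rw [← Complex.sq_norm]; nlinarith [norm_nonneg ζ]
  have key := normSq_one_sub_conj_mul_sub_normSq_sub a ζ
  rw [← sq_le_sq₀ (norm_nonneg _) (norm_nonneg _), Complex.sq_norm, Complex.sq_norm]
  nlinarith

theorem one_sub_conj_mul_ne_zero {a ζ : ℂ} (ha : ‖a‖ < 1) (hζ : ‖ζ‖ ≤ 1) :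
    1 - conj a * ζ ≠ 0 := by
  refine sub_ne_zero.mpr fun h => ?_
  have hlt : ‖conj a * ζ‖ < 1 := by
    rw [norm_mul, Complex.norm_conj]
    exact (mul_le_of_le_one_right (norm_nonneg a) hζ).trans_lt ha
  rw [← h, norm_one] at hlt
  exact lt_irrefl _ hlt

theorem norm_deriv_le_one_sub_sq_of_norm_lt_one {u : ℂ → ℂ}
    (hu : DifferentiableOn ℂ u (ball 0 1)) (hmaps : MapsTo u (ball 0 1) (closedBall 0 1))
    (hu0 : ‖u 0‖ < 1) : ‖deriv u 0‖ ≤ 1 - ‖u 0‖ ^ 2 := by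
  have h0 : (0 : ℂ) ∈ ball (0 : ℂ) 1 := mem_ball_self one_pos
  set a := u 0 with ha
  have hden : ∀ z ∈ ball (0 : ℂ) 1, 1 - conj a * u z ≠ 0 := fun z hz =>
    one_sub_conj_mul_ne_zero hu0 (mem_closedBall_zero_iff.mp (hmaps hz))
  set χ : ℂ → ℂ := fun z => (u z - a) / (1 - conj a * u z)
  have hχd : DifferentiableOn ℂ χ (ball 0 1) :=
    (hu.sub_const a).div ((hu.const_mul _).const_sub 1) hden
  have hχ0 : χ 0 = 0 := by simp [χ, ← ha]
  have hχmaps : MapsTo χ (ball 0 1) (closedBall (χ 0) 1) := by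
    intro z hz
    rw [hχ0, mem_closedBall_zero_iff, norm_div]
    exact div_le_one_of_le₀ (norm_sub_le_norm_one_sub_conj_mul hu0.le
      (mem_closedBall_zero_iff.mp (hmaps hz))) (norm_nonneg _)
  have hu_at : HasDerivAt u (deriv u 0) 0 :=
    (hu.differentiableAt (isOpen_ball.mem_nhds h0)).hasDerivAt
  have hχderiv : HasDerivAt χ (deriv u 0 / ((1 - Complex.normSq a : ℝ) : ℂ)) 0 := by
    refine ((hu_at.sub_const a).div ((hu_at.const_mul (conj a)).const_sub 1)
      (hden 0 h0)).congr_deriv ?_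
    have hden0 := hden 0 h0
    rw [← ha] at hden0 ⊢
    push_cast
    rw [Complex.normSq_eq_conj_mul_self, sub_self, zero_mul, sub_zero]
    field_simp
  have hnormSq : Complex.normSq a < 1 := by rw [← Complex.sq_norm]; nlinarith [norm_nonneg a]
  have hschwarz := Complex.norm_deriv_le_one_of_mapsTo_ball hχd hχmaps one_pos
  rwa [hχderiv.deriv, norm_div, Complex.norm_real, Real.norm_of_nonneg (by linarith),
    div_le_one (by linarith), ← Complex.sq_norm] at hschwarz

theorem norm_deriv_le_one_sub_sq {u : ℂ → ℂ} (hu : DifferentiableOn ℂ u (ball 0 1))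
    (hmaps : MapsTo u (ball 0 1) (closedBall 0 1)) : ‖deriv u 0‖ ≤ 1 - ‖u 0‖ ^ 2 := by
  have hdisk : ball (0 : ℂ) 1 ∈ 𝓝 0 := ball_mem_nhds 0 one_pos
  rcases (mem_closedBall_zero_iff.mp (hmaps (mem_of_mem_nhds hdisk))).lt_or_eq with hlt | heq
  · exact norm_deriv_le_one_sub_sq_of_norm_lt_one hu hmaps hlt
  · have hmax : IsLocalMax (norm ∘ u) 0 :=
      Filter.eventually_of_mem hdisk fun z hz => by simpa [heq] using hmaps hz
    have hconst : u =ᶠ[𝓝 0] fun _ => u 0 := Complex.eventually_eq_of_isLocalMax_norm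
      (Filter.eventually_of_mem hdisk fun z hz => hu.differentiableAt
        (isOpen_ball.mem_nhds hz)) hmax
    rw [hconst.deriv_eq, deriv_const, heq]
    norm_num

end SchwarzPick

theorem norm_taylorCoeff_two_le {w : ℂ → ℂ} (hw : DifferentiableOn ℂ w (ball 0 1)) (hw0 : w 0 = 0)
    (hmaps : MapsTo w (ball 0 1) (closedBall 0 1)) :
    ‖taylorCoeff w 2‖ ≤ 1 - ‖taylorCoeff w 1‖ ^ 2 := by
  set ψ := dslope w 0
  have hψd : DifferentiableOn ℂ ψ (ball 0 1) :=
    (differentiableOn_dslope (ball_mem_nhds 0 one_pos)).mpr hw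
  have hψmaps : MapsTo ψ (ball 0 1) (closedBall 0 1) := fun z hz => by
    simpa using Complex.norm_dslope_le_div_of_mapsTo_ball hw (by rwa [hw0]) hz
  have hψ : ContDiffAt ℂ 2 ψ 0 := (hψd.analyticAt (ball_mem_nhds 0 one_pos)).contDiffAt
  have hw_eq : w = fun z => z * ψ z :=
    funext fun z => by simpa [hw0] using (sub_smul_dslope w 0 z).symm
  rw [hw_eq, taylorCoeff_id_mul (n := 1) hψ, taylorCoeff_id_mul (n := 0) (hψ.of_le one_le_two),
    taylorCoeff_zero, taylorCoeff_one]
  exact norm_deriv_le_one_sub_sq hψd hψmaps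

theorem deriv_log_mul_eventuallyEq {g : ℂ → ℂ} {x : ℂ} (hg : AnalyticAt ℂ g x)
    (hx : g x ∈ slitPlane) :
    deriv (fun z => log (g z)) * g =ᶠ[𝓝 x] deriv g := by
  have hslit : ∀ᶠ z in 𝓝 x, g z ∈ slitPlane :=
    hg.continuousAt.eventually (isOpen_slitPlane.mem_nhds hx)
  filter_upwards [hslit, hg.eventually_analyticAt] with z hz hgz
  rw [Pi.mul_apply, (hgz.differentiableAt.hasDerivAt.clog hz).deriv,
    div_mul_cancel₀ _ (slitPlane_ne_zero hz)]

section LogOneAdd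

variable {w : ℂ → ℂ}

theorem analyticAt_log_one_add (hw : AnalyticAt ℂ w 0) (hw0 : w 0 = 0) :
    AnalyticAt ℂ (fun z => log (1 + w z)) 0 :=
  (analyticAt_const.fun_add hw).clog (by simp [hw0])

theorem deriv_log_one_add_mul_eventuallyEq (hw : AnalyticAt ℂ w 0) (hw0 : w 0 = 0) :
    deriv (fun z => log (1 + w z)) * (fun z => 1 + w z) =ᶠ[𝓝 0] deriv w := by
  simpa only [deriv_const_add'] using
    deriv_log_mul_eventuallyEq (analyticAt_const.fun_add hw) (by simp [hw0])

theorem taylorCoeff_one_log_one_add (hw : AnalyticAt ℂ w 0) (hw0 : w 0 = 0) :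
    taylorCoeff (fun z => log (1 + w z)) 1 = taylorCoeff w 1 := by
  have h := (deriv_log_one_add_mul_eventuallyEq hw hw0).taylorCoeff_eq 0
  rw [taylorCoeff_mul (analyticAt_log_one_add hw hw0).deriv.contDiffAt
    (analyticAt_const.fun_add hw).contDiffAt] at h
  simpa [taylorCoeff_deriv, taylorCoeff_zero, taylorCoeff_one, hw0] using h

theorem taylorCoeff_two_log_one_add (hw : AnalyticAt ℂ w 0) (hw0 : w 0 = 0) :
    taylorCoeff (fun z => log (1 + w z)) 2 = taylorCoeff w 2 - taylorCoeff w 1 ^ 2 / 2 := by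
  have h := (deriv_log_one_add_mul_eventuallyEq hw hw0).taylorCoeff_eq 1
  rw [taylorCoeff_mul (analyticAt_log_one_add hw hw0).deriv.contDiffAt
    (analyticAt_const.fun_add hw).contDiffAt] at h
  simp [Finset.sum_range_succ, taylorCoeff_deriv, taylorCoeff_zero, taylorCoeff_const_add,
    taylorCoeff_one_log_one_add hw hw0, hw0] at h
  linear_combination h / 2

end LogOneAdd

theorem taylorCoeff_three_of_eventuallyEq_id_mul_deriv_mul {f h : ℂ → ℂ} (hf : AnalyticAt ℂ f 0)
    (hh : AnalyticAt ℂ h 0) (hf1 : deriv f 0 = 1) (hh0 : h 0 = 1)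
    (heq : f =ᶠ[𝓝 0] fun z => z * deriv f z * h z) :
    taylorCoeff f 3 = taylorCoeff h 1 ^ 2 - taylorCoeff h 2 / 2 := by
  set g : ℂ → ℂ := fun z => z * deriv f z
  have hg : ∀ k : ℕ, taylorCoeff g (k + 1) = (k + 1) * taylorCoeff f (k + 1) := fun k => by
    rw [taylorCoeff_id_mul hf.deriv.contDiffAt, taylorCoeff_deriv]
  have hg0 : taylorCoeff g 0 = 0 := by simp [g, taylorCoeff_zero]
  have hcoeff (n : ℕ) := (heq.taylorCoeff_eq n).trans
    (taylorCoeff_mul (g := h) (f := g) (analyticAt_id.mul hf.deriv).contDiffAt hh.contDiffAt)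
  have e2 := hcoeff 2
  have e3 := hcoeff 3
  simp only [Finset.sum_range_succ, Finset.sum_range_zero] at e2 e3
  norm_num [hg, hg0, taylorCoeff_zero, taylorCoeff_one, hf1, hh0] at e2 e3
  rw [taylorCoeff_one]
  linear_combination (-1 / 2 : ℂ) * e3 + deriv h 0 * e2

theorem abs_a3_le (f : ℂ → ℂ) (hf : IsSB f) :
    ‖taylorCoeff f 3‖ ≤ 3 / 4 := by
  obtain ⟨hfd, -, hf1, w, hwd, hw0, hwlt, heq⟩ := hf
  have hdisk : ball (0 : ℂ) 1 ∈ 𝓝 0 := ball_mem_nhds 0 one_pos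
  have hwa : AnalyticAt ℂ w 0 := hwd.analyticAt hdisk
  have ha3 := taylorCoeff_three_of_eventuallyEq_id_mul_deriv_mul
    (h := fun z => 1 - log (1 + w z)) (hfd.analyticAt hdisk)
    (analyticAt_const.sub (analyticAt_log_one_add hwa hw0)) hf1 (by simp [hw0])
    (Filter.eventually_of_mem hdisk fun z hz => (heq z hz).symm)
  rw [taylorCoeff_const_sub one_pos, taylorCoeff_const_sub two_pos,
    taylorCoeff_one_log_one_add hwa hw0, taylorCoeff_two_log_one_add hwa hw0] at ha3
  have hc := norm_taylorCoeff_two_le hwd hw0 fun z hz =>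
    mem_closedBall_zero_iff.mpr (hwlt z hz).le
  calc ‖taylorCoeff f 3‖
      = ‖3 / 4 * taylorCoeff w 1 ^ 2 + 1 / 2 * taylorCoeff w 2‖ := by rw [ha3]; ring_nf
    _ ≤ 3 / 4 * ‖taylorCoeff w 1‖ ^ 2 + 1 / 2 * ‖taylorCoeff w 2‖ := by
      refine (norm_add_le _ _).trans ?_
      norm_num [norm_pow]
    _ ≤ 3 / 4 := by nlinarith [norm_nonneg (taylorCoeff w 2), sq_nonneg ‖taylorCoeff w 1‖]
end

section
/- If f belongs to the class S*_B, then the second-order Hankel determinant H_{2,1}(f) = a_3 − a_2² satisfies |a_3 − a_2²| ≤ 1/2. -/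
open Complex Metric

/-!
With `L = log (1 + w)`, comparing the coefficients of `z²` and `z³` on both sides of
`z f' (1 - L) = f` gives `a₂ = L'(0)` and `a₃ - a₂² = L''(0) / 4`, and differentiating
`(1 + w) L' = w'` gives `L''(0) = w''(0) - w'(0)²`. The Schwarz–Pick lemma applied to `w z / z`,
which maps the disc into the closed disc, gives `|w''(0)| ≤ 2 (1 - |w'(0)|²)`, so
`|a₃ - a₂²| ≤ (2 - |w'(0)|²) / 4 ≤ 1 / 2`.
-/

open Filter Topology Set ComplexConjugate

attribute [local fun_prop] AnalyticAt.contDiffAt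

lemma sq_norm_one_sub_conj_mul_sub_sq_norm_sub (a b : ℂ) :
    ‖1 - conj b * a‖ ^ 2 - ‖a - b‖ ^ 2 = (1 - ‖a‖ ^ 2) * (1 - ‖b‖ ^ 2) := by
  simp only [Complex.sq_norm, normSq_apply, sub_re, sub_im, mul_re, mul_im, one_re, one_im,
    conj_re, conj_im]
  ring

lemma norm_sub_div_one_sub_conj_mul_lt_one {a b : ℂ} (ha : ‖a‖ < 1) (hb : ‖b‖ < 1) :
    ‖(a - b) / (1 - conj b * a)‖ < 1 := by
  have key : ‖a - b‖ ^ 2 < ‖1 - conj b * a‖ ^ 2 := by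
    have := sq_norm_one_sub_conj_mul_sub_sq_norm_sub a b
    have : 0 < (1 - ‖a‖ ^ 2) * (1 - ‖b‖ ^ 2) := by
      apply mul_pos <;> nlinarith [norm_nonneg a, norm_nonneg b]
    linarith
  have key := lt_of_pow_lt_pow_left₀ 2 (norm_nonneg _) key
  rwa [norm_div, div_lt_one ((norm_nonneg _).trans_lt key)]

theorem norm_deriv_le_one_sub_sq_of_mapsTo_ball {g : ℂ → ℂ}
    (hd : DifferentiableOn ℂ g (ball 0 1)) (hg : MapsTo g (ball 0 1) (ball 0 1)) :
    ‖deriv g 0‖ ≤ 1 - ‖g 0‖ ^ 2 := by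
  have h0 : (0 : ℂ) ∈ ball (0 : ℂ) 1 := mem_ball_self one_pos
  set b := g 0 with hb0
  have hb : ‖b‖ < 1 := mem_ball_zero_iff.mp (hg h0)
  have hden : ∀ z ∈ ball (0 : ℂ) 1, 1 - conj b * g z ≠ 0 := by
    intro z hz
    refine sub_ne_zero.mpr fun h => ?_
    have : ‖conj b * g z‖ < 1 := by
      rw [norm_mul, norm_conj]
      exact mul_lt_one_of_nonneg_of_lt_one_left (norm_nonneg _) hb
        (mem_ball_zero_iff.mp (hg hz)).le
    simp [← h] at this
  -- Compose with the disc automorphism sending `g 0` to `0`, then apply the Schwarz lemma.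
  set φ := fun z => (g z - b) / (1 - conj b * g z)
  have hφd : DifferentiableOn ℂ φ (ball 0 1) :=
    (hd.sub_const b).div ((differentiableOn_const 1).sub (hd.const_mul _)) hden
  have hφ : MapsTo φ (ball 0 1) (closedBall (φ 0) 1) := by
    intro z hz
    simpa [φ, b] using (norm_sub_div_one_sub_conj_mul_lt_one (mem_ball_zero_iff.mp (hg hz)) hb).le
  have hschwarz := Complex.norm_deriv_le_one_of_mapsTo_ball hφd hφ one_pos
  have hgd := (hd.differentiableAt (isOpen_ball.mem_nhds h0)).hasDerivAt
  have hφ' : HasDerivAt φ (deriv g 0 / (1 - conj b * b)) 0 := by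
    refine ((hgd.sub_const b).fun_div ((hgd.const_mul (conj b)).const_sub 1)
      (hden 0 h0)).congr_deriv ?_
    rw [← hb0, sub_self, zero_mul, sub_zero, sq, mul_div_mul_right _ _ (hden 0 h0)]
  have hnorm : ‖1 - conj b * b‖ = 1 - ‖b‖ ^ 2 := by
    rw [← mul_comm, mul_conj, ← ofReal_one, ← ofReal_sub, norm_real, normSq_eq_norm_sq,
      Real.norm_of_nonneg (by nlinarith [norm_nonneg b])]
  rw [hφ'.deriv, norm_div, hnorm, div_le_one (by nlinarith [norm_nonneg b])] at hschwarz
  exact hschwarz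

theorem norm_deriv_le_one_sub_sq_of_mapsTo_closedBall {g : ℂ → ℂ}
    (hd : DifferentiableOn ℂ g (ball 0 1)) (hg : MapsTo g (ball 0 1) (closedBall 0 1)) :
    ‖deriv g 0‖ ≤ 1 - ‖g 0‖ ^ 2 := by
  have hgd : DifferentiableAt ℂ g 0 := hd.differentiableAt (ball_mem_nhds 0 one_pos)
  have hr : ∀ r ∈ Ioo (0 : ℝ) 1, r * ‖deriv g 0‖ + r ^ 2 * ‖g 0‖ ^ 2 ≤ 1 := by
    rintro r ⟨hr0, hr1⟩
    have hrg : MapsTo (fun z => (r : ℂ) * g z) (ball 0 1) (ball 0 1) := fun z hz => by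
      rw [mem_ball_zero_iff, norm_mul, norm_real, Real.norm_of_nonneg hr0.le]
      exact mul_lt_one_of_nonneg_of_lt_one_left hr0.le hr1 (mem_closedBall_zero_iff.mp (hg hz))
    have h := norm_deriv_le_one_sub_sq_of_mapsTo_ball (hd.const_mul (r : ℂ)) hrg
    rw [deriv_const_mul _ hgd] at h
    simp only [norm_mul, norm_real, Real.norm_of_nonneg hr0.le, mul_pow] at h
    linarith
  have hlim : Tendsto (fun r : ℝ => r * ‖deriv g 0‖ + r ^ 2 * ‖g 0‖ ^ 2) (𝓝[<] 1)
      (𝓝 (‖deriv g 0‖ + ‖g 0‖ ^ 2)) := by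
    have hc : Continuous fun r : ℝ => r * ‖deriv g 0‖ + r ^ 2 * ‖g 0‖ ^ 2 := by fun_prop
    simpa using (hc.tendsto 1).mono_left nhdsWithin_le_nhds
  have := le_of_tendsto hlim (eventually_of_mem (Ioo_mem_nhdsLT one_pos) hr)
  linarith

theorem norm_deriv_deriv_le_of_mapsTo_ball {w : ℂ → ℂ} (hd : DifferentiableOn ℂ w (ball 0 1))
    (hw : MapsTo w (ball 0 1) (ball 0 1)) (hw0 : w 0 = 0) :
    ‖deriv (deriv w) 0‖ ≤ 2 * (1 - ‖deriv w 0‖ ^ 2) := by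
  have h0 : ball (0 : ℂ) 1 ∈ 𝓝 0 := ball_mem_nhds 0 one_pos
  set h := dslope w 0
  have hdh : DifferentiableOn ℂ h (ball 0 1) := (differentiableOn_dslope h0).mpr hd
  have hh : MapsTo h (ball 0 1) (closedBall 0 1) := fun z hz => by
    simpa using norm_dslope_le_div_of_mapsTo_ball hd
      (by rw [hw0]; exact hw.mono_right ball_subset_closedBall) hz
  have hwh : w = fun z => z * h z :=
    funext fun z => by simpa [hw0] using (sub_smul_dslope w 0 z).symm
  have hha : AnalyticAt ℂ h 0 := hdh.analyticAt h0
  have h2 : deriv (deriv w) 0 = 2 * deriv h 0 := by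
    have := iteratedDeriv_fun_mul (n := 2) (x := (0 : ℂ)) (f := fun z => z) (g := h)
      (by fun_prop) (by fun_prop)
    rw [← hwh] at this
    simpa [Finset.sum_range_succ, iteratedDeriv_succ', iteratedDeriv_fun_id_zero] using this
  rw [h2, norm_mul, Complex.norm_two, ← show h 0 = deriv w 0 from dslope_same w 0]
  linarith [norm_deriv_le_one_sub_sq_of_mapsTo_closedBall hdh hh]

theorem deriv_deriv_log_one_add {w : ℂ → ℂ} (hw : AnalyticAt ℂ w 0) (hw0 : w 0 = 0) :
    deriv (deriv fun z => log (1 + w z)) 0 = deriv (deriv w) 0 - deriv w 0 ^ 2 := by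
  set L := fun z => log (1 + w z)
  have hslit : ∀ᶠ z in 𝓝 0, 1 + w z ∈ slitPlane :=
    (hw.continuousAt.const_add 1).eventually_mem (isOpen_slitPlane.mem_nhds (by simp [hw0]))
  have hL : AnalyticAt ℂ L 0 := (analyticAt_const.add hw).clog (by simp [hw0])
  have hL' : (fun z => 1 + w z) * deriv L =ᶠ[𝓝 0] deriv w := by
    filter_upwards [hslit, hw.eventually_analyticAt] with z hz hwz
    rw [Pi.mul_apply, ((hwz.differentiableAt.hasDerivAt.const_add 1).clog hz).deriv]
    field_simp [slitPlane_ne_zero hz]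
  have h0 := hL'.eq_of_nhds
  have h1 := hL'.iteratedDeriv_eq 1
  rw [iteratedDeriv_mul (by fun_prop) (by fun_prop)] at h1
  simp [Finset.sum_range_succ, hw0] at h0 h1
  linear_combination h1 - deriv w 0 * h0

theorem taylorCoeff_three_sub_sq_of_eq_mul_one_sub {f L : ℂ → ℂ} (hf : AnalyticAt ℂ f 0)
    (hL : AnalyticAt ℂ L 0) (hL0 : L 0 = 0) (hf1 : deriv f 0 = 1)
    (h : (fun z => z * deriv f z * (1 - L z)) =ᶠ[𝓝 0] f) :
    taylorCoeff f 3 - taylorCoeff f 2 ^ 2 = deriv (deriv L) 0 / 4 := by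
  have hf' : AnalyticAt ℂ (deriv f) 0 := hf.deriv
  have h2 := h.iteratedDeriv_eq 2
  have h3 := h.iteratedDeriv_eq 3
  simp (discharger := fun_prop) [iteratedDeriv_fun_mul, iteratedDeriv_fun_id_zero,
    Finset.sum_range_succ, hL0, hf1, iteratedDeriv_succ'] at h2 h3
  have ha2 : taylorCoeff f 2 = deriv (deriv f) 0 / 2 := by
    simp [taylorCoeff, iteratedDeriv_succ']
  have ha3 : taylorCoeff f 3 = deriv (deriv (deriv f)) 0 / 6 := by
    simp [taylorCoeff, iteratedDeriv_succ', Nat.factorial]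
  rw [ha2, ha3]
  linear_combination (1 / 12 : ℂ) * h3 - deriv (deriv f) 0 / 4 * h2

theorem hankel_H21 (f : ℂ → ℂ) (hf : IsSB f) :
    ‖taylorCoeff f 3 - (taylorCoeff f 2) ^ 2‖ ≤ 1 / 2 := by
  obtain ⟨hfd, -, hf1, w, hwd, hw0, hw, heq⟩ := hf
  have h0 : ball (0 : ℂ) 1 ∈ 𝓝 0 := ball_mem_nhds 0 one_pos
  have hwa : AnalyticAt ℂ w 0 := hwd.analyticAt h0
  have hL : AnalyticAt ℂ (fun z => log (1 + w z)) 0 :=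
    (analyticAt_const.add hwa).clog (by simp [hw0])
  have hw'' := norm_deriv_deriv_le_of_mapsTo_ball hwd
    (fun z hz => mem_ball_zero_iff.mpr (hw z hz)) hw0
  rw [taylorCoeff_three_sub_sq_of_eq_mul_one_sub (hfd.analyticAt h0) hL (by simp [hw0]) hf1
    (eventually_of_mem h0 heq), deriv_deriv_log_one_add hwa hw0, norm_div, RCLike.norm_ofNat]
  calc ‖deriv (deriv w) 0 - deriv w 0 ^ 2‖ / 4
      ≤ (‖deriv (deriv w) 0‖ + ‖deriv w 0‖ ^ 2) / 4 := by
        gcongr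
        exact (norm_sub_le _ _).trans_eq (by rw [norm_pow])
    _ ≤ 1 / 2 := by linarith [sq_nonneg ‖deriv w 0‖]
end

section
/- Let p be analytic on the open unit disk 𝔻 with p(0) = 1 and Re p(z) > 0 for all z ∈ 𝔻, and let p_n denote its n-th Taylor coefficient at 0. Then for all positive integers n, k and every complex number μ, one has |p_{n+k} − μ·p_n·p_k| ≤ 2·max{1, |2μ − 1|}; in particular |p_{n+k} − μ·p_n·p_k| ≤ 2 whenever μ is real with 0 ≤ μ ≤ 1. -/
open Complex Metric

/-
On a circle |z| = r < 1 the function Re p is a nonnegative weight of mean Re p(0) = 1, so it defines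
a probability measure ν on the angles. Under ν the unimodular functions e^{-imθ} have means
r^m p_m / 2 for m ≥ 1, because the circle averages of z̄^m p and of z^m p (m ≥ 1) are r^{2m} p_m
and 0. For X = e^{-inθ}, Y = e^{-ikθ} with means a, b and E[XY] = c, the Cauchy–Schwarz
inequality for the covariance gives |c - ab| ≤ √(1 - |a|²) √(1 - |b|²) ≤ 1 - |a||b|. Writing
r^{n+k}(p_{n+k} - μ p_n p_k) = 2(c - ab) - 2(2μ - 1)ab then bounds it by
2(1 - |a||b|) + 2|2μ - 1||a||b| ≤ 2 max(1, |2μ - 1|), and r → 1 finishes the proof.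
-/

open MeasureTheory Real ComplexConjugate

theorem Real.sqrt_one_sub_sq_mul_sqrt_one_sub_sq_le {x y : ℝ} (hx : x ^ 2 ≤ 1) (hy : y ^ 2 ≤ 1) :
    √(1 - x ^ 2) * √(1 - y ^ 2) ≤ 1 - x * y := by
  rw [← Real.sqrt_mul (by linarith)]
  exact Real.sqrt_le_iff.2 ⟨by nlinarith [sq_nonneg (x - y)], by nlinarith [sq_nonneg (x - y)]⟩

open Filter Topology in
theorem le_of_forall_mul_pow_le {x y : ℝ} {N : ℕ} (h : ∀ r ∈ Set.Ioo (0 : ℝ) 1, x * r ^ N ≤ y) :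
    x ≤ y := by
  have hlim : Tendsto (fun r : ℝ => x * r ^ N) (𝓝[<] 1) (𝓝 x) := by
    have hcont : Continuous fun r : ℝ => x * r ^ N := by fun_prop
    simpa using (hcont.tendsto 1).mono_left nhdsWithin_le_nhds
  exact le_of_tendsto hlim (eventually_of_mem (Ioo_mem_nhdsLT zero_lt_one) h)

theorem norm_sub_mul_mul_le_of_norm_half_sub_le {a b c : ℂ}
    (h : ‖c / 2 - a / 2 * (b / 2)‖ ≤ 1 - ‖a / 2‖ * ‖b / 2‖) (μ : ℂ) :
    ‖c - μ * a * b‖ ≤ 2 * max 1 ‖2 * μ - 1‖ := by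
  set t := ‖a / 2‖ * ‖b / 2‖
  have ht₀ : 0 ≤ t := by positivity
  have ht₁ : 0 ≤ 1 - t := (norm_nonneg _).trans h
  have hdecomp : c - μ * a * b =
      2 * (c / 2 - a / 2 * (b / 2)) - 2 * (2 * μ - 1) * (a / 2 * (b / 2)) := by ring
  calc ‖c - μ * a * b‖ ≤ 2 * ‖c / 2 - a / 2 * (b / 2)‖ + 2 * ‖2 * μ - 1‖ * t := by
        rw [hdecomp]
        refine (norm_sub_le _ _).trans_eq ?_
        simp only [norm_mul, Complex.norm_two, t]
    _ ≤ 2 * (1 - t) + 2 * ‖2 * μ - 1‖ * t := by gcongr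
    _ ≤ 2 * max 1 ‖2 * μ - 1‖ := by
        nlinarith [mul_le_mul_of_nonneg_left (le_max_left 1 ‖2 * μ - 1‖) ht₁,
          mul_le_mul_of_nonneg_left (le_max_right 1 ‖2 * μ - 1‖) ht₀]

namespace MeasureTheory

variable {Ω : Type*} [MeasurableSpace Ω] {μ : Measure Ω}

theorem integral_mul_le_L2_mul_L2_of_nonneg {f g : Ω → ℝ} (hf : 0 ≤ᵐ[μ] f) (hg : 0 ≤ᵐ[μ] g)
    (hf2 : MemLp f 2 μ) (hg2 : MemLp g 2 μ) :
    ∫ ω, f ω * g ω ∂μ ≤ √(∫ ω, f ω ^ 2 ∂μ) * √(∫ ω, g ω ^ 2 ∂μ) := by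
  have := integral_mul_le_Lp_mul_Lq_of_nonneg Real.HolderConjugate.two_two hf hg
    (by rwa [ENNReal.ofReal_ofNat]) (by rwa [ENNReal.ofReal_ofNat])
  simpa only [Real.rpow_two, Real.sqrt_eq_rpow] using this

variable [IsProbabilityMeasure μ] {X Y : Ω → ℂ}

theorem integral_norm_sub_integral_sq_of_norm_eq_one (hXm : AEStronglyMeasurable X μ)
    (hX : ∀ᵐ ω ∂μ, ‖X ω‖ = 1) :
    ∫ ω, ‖X ω - ∫ ω', X ω' ∂μ‖ ^ 2 ∂μ = 1 - ‖∫ ω, X ω ∂μ‖ ^ 2 := by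
  set a := ∫ ω, X ω ∂μ
  have hXi : Integrable X μ := .of_bound hXm 1 (hX.mono fun ω h => h.le)
  have hpt : (fun ω => ‖X ω - a‖ ^ 2) =ᵐ[μ] fun ω => 1 + ‖a‖ ^ 2 - 2 * (conj a * X ω).re := by
    filter_upwards [hX] with ω hω
    rw [← Complex.normSq_eq_norm_sq, Complex.normSq_sub, Complex.normSq_eq_norm_sq,
      Complex.normSq_eq_norm_sq, hω, mul_comm (X ω)]
    ring
  have hre : ∫ ω, (conj a * X ω).re ∂μ = ‖a‖ ^ 2 := by
    have := integral_re (𝕜 := ℂ) (hXi.const_mul (conj a))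
    simp only [RCLike.re_to_complex] at this
    rw [this, integral_const_mul, Complex.conj_mul', ← Complex.ofReal_pow, Complex.ofReal_re]
  have hrei : Integrable (fun ω => (conj a * X ω).re) μ := (hXi.const_mul _).re
  rw [integral_congr_ae hpt, integral_sub (integrable_const _) (hrei.const_mul 2), integral_const,
    integral_const_mul, hre]
  simp only [probReal_univ, smul_eq_mul, one_mul]
  ring

theorem norm_integral_mul_sub_integral_mul_integral_le (hXm : AEStronglyMeasurable X μ)
    (hYm : AEStronglyMeasurable Y μ) (hX : ∀ᵐ ω ∂μ, ‖X ω‖ = 1) (hY : ∀ᵐ ω ∂μ, ‖Y ω‖ = 1) :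
    ‖∫ ω, X ω * Y ω ∂μ - (∫ ω, X ω ∂μ) * ∫ ω, Y ω ∂μ‖ ≤
      1 - ‖∫ ω, X ω ∂μ‖ * ‖∫ ω, Y ω ∂μ‖ := by
  set a := ∫ ω, X ω ∂μ
  set b := ∫ ω, Y ω ∂μ
  have hXi : Integrable X μ := .of_bound hXm 1 (hX.mono fun ω h => h.le)
  have hYi : Integrable Y μ := .of_bound hYm 1 (hY.mono fun ω h => h.le)
  have hXYi : Integrable (fun ω => X ω * Y ω) μ :=
    .of_bound (hXm.mul hYm) 1 (by filter_upwards [hX, hY] with ω h h'; simp [h, h'])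
  have hcentered : ∫ ω, (X ω - a) * (Y ω - b) ∂μ = ∫ ω, X ω * Y ω ∂μ - a * b := by
    have hpt : ∀ ω, (X ω - a) * (Y ω - b) = X ω * Y ω - (b * X ω + a * Y ω) + a * b :=
      fun ω => by ring
    have hlin : Integrable (fun ω => b * X ω + a * Y ω) μ :=
      (hXi.const_mul b).add (hYi.const_mul a)
    have hdiff : Integrable (fun ω => X ω * Y ω - (b * X ω + a * Y ω)) μ := hXYi.sub hlin
    simp only [hpt]
    rw [integral_add hdiff (integrable_const (a * b)), integral_sub hXYi hlin,
      integral_add (hXi.const_mul b) (hYi.const_mul a), integral_const_mul, integral_const_mul,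
      integral_const]
    simp only [probReal_univ, one_smul]
    ring
  have hmemLp : ∀ Z : Ω → ℂ, AEStronglyMeasurable Z μ → (∀ᵐ ω ∂μ, ‖Z ω‖ = 1) →
      ∀ c : ℂ, MemLp (fun ω => ‖Z ω - c‖) 2 μ := fun Z hZm hZ c =>
    .of_bound (hZm.sub aestronglyMeasurable_const).norm (1 + ‖c‖) <| by
      filter_upwards [hZ] with ω hω
      simpa [hω] using norm_sub_le (Z ω) c
  have hsq_le_one : ∀ Z : Ω → ℂ, AEStronglyMeasurable Z μ → (∀ᵐ ω ∂μ, ‖Z ω‖ = 1) →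
      ‖∫ ω, Z ω ∂μ‖ ^ 2 ≤ 1 := fun Z hZm hZ => by
    have : 0 ≤ ∫ ω, ‖Z ω - ∫ ω', Z ω' ∂μ‖ ^ 2 ∂μ := integral_nonneg fun ω => sq_nonneg _
    rw [integral_norm_sub_integral_sq_of_norm_eq_one hZm hZ] at this
    linarith
  calc ‖∫ ω, X ω * Y ω ∂μ - a * b‖
      = ‖∫ ω, (X ω - a) * (Y ω - b) ∂μ‖ := by rw [hcentered]
    _ ≤ ∫ ω, ‖X ω - a‖ * ‖Y ω - b‖ ∂μ := by
        simpa only [norm_mul] using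
          norm_integral_le_integral_norm fun ω => (X ω - a) * (Y ω - b)
    _ ≤ √(∫ ω, ‖X ω - a‖ ^ 2 ∂μ) * √(∫ ω, ‖Y ω - b‖ ^ 2 ∂μ) :=
        integral_mul_le_L2_mul_L2_of_nonneg (.of_forall fun _ => norm_nonneg _)
          (.of_forall fun _ => norm_nonneg _) (hmemLp X hXm hX a) (hmemLp Y hYm hY b)
    _ = √(1 - ‖a‖ ^ 2) * √(1 - ‖b‖ ^ 2) := by
        rw [integral_norm_sub_integral_sq_of_norm_eq_one hXm hX,
          integral_norm_sub_integral_sq_of_norm_eq_one hYm hY]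
    _ ≤ 1 - ‖a‖ * ‖b‖ :=
        Real.sqrt_one_sub_sq_mul_sqrt_one_sub_sq_le (hsq_le_one X hXm hX) (hsq_le_one Y hYm hY)

end MeasureTheory

noncomputable def weightedCircleMeasure (w : ℂ → ℝ) (c : ℂ) (R : ℝ) : Measure ℝ :=
  (volume.restrict (Set.Ioc 0 (2 * π))).withDensity
    fun θ => ENNReal.ofReal (w (circleMap c R θ) / (2 * π))

section weightedCircleMeasure

variable {w : ℂ → ℝ} {c : ℂ} {R : ℝ}

theorem integral_weightedCircleMeasure (hw : ContinuousOn w (sphere c |R|))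
    (hw₀ : ∀ z ∈ sphere c |R|, 0 ≤ w z) {E : Type*} [NormedAddCommGroup E] [NormedSpace ℝ E]
    (f : ℂ → E) :
    ∫ θ, f (circleMap c R θ) ∂weightedCircleMeasure w c R =
      circleAverage (fun z => w z • f z) c R := by
  have hmeas : Measurable fun θ => ENNReal.ofReal (w (circleMap c R θ) / (2 * π)) :=
    ((hw.comp_continuous (continuous_circleMap c R) (circleMap_mem_sphere' c R)).div_const
      _).measurable.ennreal_ofReal
  rw [weightedCircleMeasure, integral_withDensity_eq_integral_toReal_smul hmeas
    (.of_forall fun _ => ENNReal.ofReal_lt_top), circleAverage_def,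
    intervalIntegral.integral_of_le two_pi_pos.le, ← integral_smul]
  refine integral_congr_ae (.of_forall fun θ => ?_)
  dsimp only
  rw [ENNReal.toReal_ofReal (div_nonneg (hw₀ _ (circleMap_mem_sphere' c R θ)) two_pi_pos.le),
    smul_smul, div_eq_inv_mul]

theorem isProbabilityMeasure_weightedCircleMeasure (hw : ContinuousOn w (sphere c |R|))
    (hw₀ : ∀ z ∈ sphere c |R|, 0 ≤ w z) (h₁ : circleAverage w c R = 1) :
    IsProbabilityMeasure (weightedCircleMeasure w c R) := by
  have hcont : Continuous fun θ => w (circleMap c R θ) / (2 * π) :=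
    (hw.comp_continuous (continuous_circleMap c R) (circleMap_mem_sphere' c R)).div_const _
  have hmass : ∫ θ in Set.Ioc 0 (2 * π), w (circleMap c R θ) / (2 * π) = 1 := by
    rw [← h₁, circleAverage_def, ← intervalIntegral.integral_of_le two_pi_pos.le,
      intervalIntegral.integral_div, smul_eq_mul, inv_mul_eq_div]
  constructor
  rw [weightedCircleMeasure, withDensity_apply _ MeasurableSet.univ, Measure.restrict_univ,
    ← ofReal_integral_eq_lintegral_ofReal (hcont.integrableOn_Ioc)
      (.of_forall fun θ => div_nonneg (hw₀ _ (circleMap_mem_sphere' c R θ)) two_pi_pos.le),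
    hmass, ENNReal.ofReal_one]

end weightedCircleMeasure

section

variable {p : ℂ → ℂ} {r : ℝ}

theorem taylorCoeff_eq_circleAverage (hp : DifferentiableOn ℂ p (closedBall 0 r)) (hr : 0 < r)
    (m : ℕ) : taylorCoeff p m = circleAverage (fun z => z⁻¹ ^ m * p z) 0 r := by
  lift r to NNReal using hr.le
  have hF := hp.hasFPowerSeriesOnBall (mod_cast hr)
  have hfac := hF.factorial_smul (1 : ℂ) m
  rw [← iteratedDeriv_eq_iteratedFDeriv, cauchyPowerSeries_apply] at hfac
  rw [taylorCoeff, ← hfac, circleAverage_eq_circleIntegral (mod_cast hr.ne'), nsmul_eq_mul,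
    mul_div_cancel_left₀ _ (mod_cast m.factorial_ne_zero)]
  simp only [sub_zero, one_div, smul_eq_mul, mul_left_comm]

theorem circleAverage_div_pow_mul_eq_zero (hp : DifferentiableOn ℂ p (closedBall 0 r))
    (hr : 0 < r) {m : ℕ} (hm : m ≠ 0) : circleAverage (fun z => (z / r) ^ m * p z) 0 r = 0 := by
  have hf : DifferentiableOn ℂ (fun z => (z / r) ^ m * p z) (closedBall 0 |r|) := by
    rw [abs_of_pos hr]; fun_prop
  rw [(hf.diffContOnCl_ball subset_rfl).circleAverage]
  simp [hm]

theorem circleAverage_re (hp : DifferentiableOn ℂ p (closedBall 0 r)) (hr : 0 < r) :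
    circleAverage (fun z => (p z).re) 0 r = (p 0).re := by
  have hpc : CircleIntegrable p 0 r :=
    (hp.continuousOn.mono sphere_subset_closedBall).circleIntegrable hr.le
  rw [← (hp.diffContOnCl_ball (by rw [abs_of_pos hr])).circleAverage]
  exact reCLM.circleAverage_comp_comm hpc

theorem circleAverage_re_smul_conj_div_pow (hp : DifferentiableOn ℂ p (closedBall 0 r))
    (hr : 0 < r) {m : ℕ} (hm : m ≠ 0) :
    circleAverage (fun z => (p z).re • (conj z / r) ^ m) 0 r = r ^ m * taylorCoeff p m / 2 := by
  have hsplit : Set.EqOn (fun z => (p z).re • (conj z / r) ^ m)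
      (fun z => (2 : ℝ)⁻¹ • ((r : ℂ) ^ m • (z⁻¹ ^ m * p z) + conj ((z / r) ^ m * p z)))
      (sphere 0 |r|) := by
    -- on the circle `conj z / r = r / z`, and `Re p = (p + conj p) / 2`
    intro z hz
    rw [mem_sphere_zero_iff_norm, abs_of_pos hr] at hz
    have hz0 : z ≠ 0 := norm_pos_iff.1 (hz ▸ hr)
    have hr' : (r : ℂ) ≠ 0 := mod_cast hr.ne'
    have hconj : conj z / r = r * z⁻¹ := by
      have := Complex.mul_conj' z
      rw [hz] at this
      field_simp
      linear_combination this
    simp only [map_mul, map_pow, map_div₀, Complex.conj_ofReal, Complex.re_eq_add_conj,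
      Complex.real_smul, smul_eq_mul, hconj]
    push_cast
    ring
  have hcont₁ : ContinuousOn (fun z => (r : ℂ) ^ m • (z⁻¹ ^ m * p z)) (sphere 0 r) := by
    refine (continuousOn_const (c := (r : ℂ) ^ m)).smul
      (((continuousOn_inv₀.mono ?_).pow m).mul (hp.continuousOn.mono sphere_subset_closedBall))
    exact fun z hz => ne_of_mem_sphere hz hr.ne'
  have hcont₂ : ContinuousOn (fun z => (z / r) ^ m * p z) (sphere 0 r) :=
    (((continuous_id.div_const _).pow m).continuousOn.mul hp.continuousOn).mono
      sphere_subset_closedBall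
  have hconj_avg : circleAverage (fun z => conj ((z / r) ^ m * p z)) 0 r =
      conj (circleAverage (fun z => (z / r) ^ m * p z) 0 r) :=
    conjCLE.toContinuousLinearMap.circleAverage_comp_comm (hcont₂.circleIntegrable hr.le)
  have hint : CircleIntegrable (fun z => conj ((z / r) ^ m * p z)) 0 r :=
    (Complex.continuous_conj.comp_continuousOn hcont₂).circleIntegrable hr.le
  rw [circleAverage_congr_sphere hsplit, circleAverage_fun_smul,
    circleAverage_fun_add (hcont₁.circleIntegrable hr.le) hint,
    circleAverage_fun_smul, hconj_avg, circleAverage_div_pow_mul_eq_zero hp hr hm,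
    ← taylorCoeff_eq_circleAverage hp hr]
  simp only [map_zero, add_zero, Complex.real_smul, smul_eq_mul]
  push_cast
  ring

theorem norm_half_taylorCoeff_add_sub_mul_le (hp : DifferentiableOn ℂ p (closedBall 0 r))
    (hr : 0 < r) (hre : ∀ z ∈ sphere 0 r, 0 ≤ (p z).re) (hp₀ : (p 0).re = 1) {n k : ℕ} (hn : n ≠ 0)
    (hk : k ≠ 0) :
    ‖r ^ (n + k) * taylorCoeff p (n + k) / 2 -
        r ^ n * taylorCoeff p n / 2 * (r ^ k * taylorCoeff p k / 2)‖ ≤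
      1 - ‖r ^ n * taylorCoeff p n / 2‖ * ‖r ^ k * taylorCoeff p k / 2‖ := by
  have hsph : sphere (0 : ℂ) |r| = sphere 0 r := by rw [abs_of_pos hr]
  have hw : ContinuousOn (fun z => (p z).re) (sphere 0 |r|) := hsph ▸
    Complex.continuous_re.comp_continuousOn (hp.continuousOn.mono sphere_subset_closedBall)
  have hw₀ : ∀ z ∈ sphere (0 : ℂ) |r|, 0 ≤ (p z).re := hsph ▸ hre
  have hprob := isProbabilityMeasure_weightedCircleMeasure hw hw₀ <| by
    rw [circleAverage_re hp hr, hp₀]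
  have hmoment : ∀ m ≠ 0, ∫ θ, (conj (circleMap 0 r θ) / r) ^ m
      ∂weightedCircleMeasure (fun z => (p z).re) 0 r = r ^ m * taylorCoeff p m / 2 :=
    fun m hm => by
      rw [integral_weightedCircleMeasure hw hw₀ (fun z => (conj z / r) ^ m),
        circleAverage_re_smul_conj_div_pow hp hr hm]
  have hunit : ∀ m θ, ‖(conj (circleMap 0 r θ) / r) ^ m‖ = 1 := fun m θ => by
    rw [norm_pow, norm_div, Complex.norm_conj, norm_circleMap_zero, Complex.norm_real,
      Real.norm_eq_abs, div_self (abs_pos.2 hr.ne').ne', one_pow]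
  have hmeas : ∀ m, AEStronglyMeasurable (fun θ => (conj (circleMap 0 r θ) / r) ^ m)
      (weightedCircleMeasure (fun z => (p z).re) 0 r) := fun m =>
    Continuous.aestronglyMeasurable (by fun_prop)
  have hcov := norm_integral_mul_sub_integral_mul_integral_le (hmeas n) (hmeas k)
    (.of_forall (hunit n)) (.of_forall (hunit k))
  simp only [← pow_add] at hcov
  rwa [hmoment n hn, hmoment k hk, hmoment (n + k) (by omega)] at hcov

end

theorem caratheodory_coeff_functional (p : ℂ → ℂ)
    (hp : DifferentiableOn ℂ p (ball (0:ℂ) 1)) (hp0 : p 0 = 1)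
    (hre : ∀ z ∈ ball (0:ℂ) 1, 0 < (p z).re) :
    ∀ n k : ℕ, 0 < n → 0 < k →
      (∀ μ : ℂ, ‖taylorCoeff p (n + k) - μ * taylorCoeff p n * taylorCoeff p k‖ ≤
        2 * max 1 ‖2 * μ - 1‖) ∧
      (∀ μ : ℝ, 0 ≤ μ → μ ≤ 1 →
        ‖taylorCoeff p (n + k) - (μ : ℂ) * taylorCoeff p n * taylorCoeff p k‖ ≤ 2) := by
  intro n k hn hk
  have hbound (μ : ℂ) : ‖taylorCoeff p (n + k) - μ * taylorCoeff p n * taylorCoeff p k‖ ≤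
      2 * max 1 ‖2 * μ - 1‖ := by
    refine le_of_forall_mul_pow_le (N := n + k) fun r hr => ?_
    have hball : closedBall (0 : ℂ) r ⊆ ball 0 1 := closedBall_subset_ball hr.2
    have hcov := norm_half_taylorCoeff_add_sub_mul_le (hp.mono hball) hr.1
      (fun z hz => (hre z (hball (sphere_subset_closedBall hz))).le) (by simp [hp0]) hn.ne' hk.ne'
    have := norm_sub_mul_mul_le_of_norm_half_sub_le hcov μ
    rwa [show (r : ℂ) ^ (n + k) * taylorCoeff p (n + k) -
        μ * ((r : ℂ) ^ n * taylorCoeff p n) * ((r : ℂ) ^ k * taylorCoeff p k) =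
        (taylorCoeff p (n + k) - μ * taylorCoeff p n * taylorCoeff p k) * (r : ℂ) ^ (n + k) by
      ring, norm_mul, norm_pow, Complex.norm_real, Real.norm_of_nonneg hr.1.le] at this
  refine ⟨hbound, fun μ hμ₀ hμ₁ => ?_⟩
  have hmax : max 1 ‖2 * (μ : ℂ) - 1‖ = 1 := by
    refine max_eq_left ?_
    rw [show 2 * (μ : ℂ) - 1 = ((2 * μ - 1 : ℝ) : ℂ) by push_cast; ring, Complex.norm_real,
      Real.norm_eq_abs, abs_le]
    constructor <;> linarith
  simpa [hmax] using hbound μ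
end

section
/- Let A, B, C be real numbers with A·C ≥ 0, and define Y(A,B,C) = max over z in the closed unit disk of (|A + B·z + C·z²| + 1 − |z|²). If |B| ≥ 2(1 − |C|), then Y(A,B,C) = |A| + |B| + |C|; if |B| < 2(1 − |C|), then Y(A,B,C) = 1 + |A| + B²/(4(1 − |C|)). -/
open Complex Metric

/-!
The triangle inequality bounds the function at `z` by the radial quadratic
`g(t) = |A| + |B| t + |C| t² + 1 - t²` at `t = ‖z‖`. Since `A` and `C` share a sign, a suitable
real `z = ±t` makes the three terms of `A + B z + C z²` share a sign as well, so the bound is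
attained. Hence `Y` is the maximum of `g` on `[0, 1]`, a one-variable quadratic whose maximum sits
at the endpoint `t = 1` or at the vertex `t = |B| / (2 (1 - |C|))`.
-/

theorem IsGreatest.image_of_le_comp {α β γ : Type*} [PartialOrder γ] {f : α → γ} {g : β → γ}
    {s : Set α} {t : Set β} {φ : α → β} (hφ : Set.MapsTo φ s t) (hle : ∀ x ∈ s, f x ≤ g (φ x))
    (hsub : g '' t ⊆ f '' s) {y : γ} (h : IsGreatest (f '' s) y) : IsGreatest (g '' t) y := by
  refine ⟨?_, fun _ hw => h.2 (hsub hw)⟩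
  obtain ⟨x, hx, rfl⟩ := h.1
  have hφx : g (φ x) ∈ g '' t := Set.mem_image_of_mem g (hφ hx)
  rwa [le_antisymm (hle x hx) (h.2 (hsub hφx))]

theorem norm_add_mul_add_mul_sq_le {R : Type*} [SeminormedRing R] (a b c z : R) :
    ‖a + b * z + c * z ^ 2‖ ≤ ‖a‖ + ‖b‖ * ‖z‖ + ‖c‖ * ‖z‖ ^ 2 := by
  have hb := norm_mul_le b z
  have hc := (norm_mul_le c (z ^ 2)).trans
    (mul_le_mul_of_nonneg_left (norm_pow_le' z two_pos) (norm_nonneg c))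
  linarith [norm_add₃_le (a := a) (b := b * z) (c := c * z ^ 2)]

theorem exists_sign_mul_eq_abs (a : ℝ) : ∃ s : ℝ, |s| = 1 ∧ s * a = |a| := by
  rcases le_or_gt 0 a with ha | ha
  · exact ⟨1, abs_one, by rw [one_mul, abs_of_nonneg ha]⟩
  · exact ⟨-1, by norm_num, by rw [abs_of_neg ha]; ring⟩

theorem exists_sign_mul_eq_abs_of_mul_nonneg {a c : ℝ} (hac : 0 ≤ a * c) :
    ∃ s : ℝ, |s| = 1 ∧ s * a = |a| ∧ s * c = |c| := by
  rcases mul_nonneg_iff.mp hac with ⟨ha, hc⟩ | ⟨ha, hc⟩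
  · exact ⟨1, abs_one, by rw [one_mul, abs_of_nonneg ha], by rw [one_mul, abs_of_nonneg hc]⟩
  · exact ⟨-1, by norm_num, by rw [abs_of_nonpos ha]; ring, by rw [abs_of_nonpos hc]; ring⟩

theorem exists_abs_eq_abs_add_mul_add_mul_sq {A C : ℝ} (hAC : 0 ≤ A * C) (B : ℝ) {t : ℝ}
    (ht : 0 ≤ t) : ∃ x : ℝ, |x| = t ∧ |A + B * x + C * x ^ 2| = |A| + |B| * t + |C| * t ^ 2 := by
  obtain ⟨ε, hε, hεA, hεC⟩ := exists_sign_mul_eq_abs_of_mul_nonneg hAC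
  obtain ⟨σ, hσ, hσB⟩ := exists_sign_mul_eq_abs (ε * B)
  have hσ2 : σ ^ 2 = 1 := by rw [← sq_abs, hσ, one_pow]
  have hεB : |ε * B| = |B| := by rw [abs_mul, hε, one_mul]
  refine ⟨σ * t, by rw [abs_mul, hσ, one_mul, abs_of_nonneg ht], ?_⟩
  have hsum : ε * (A + B * (σ * t) + C * (σ * t) ^ 2) = |A| + |B| * t + |C| * t ^ 2 := by
    rw [← hεA, ← hεC, ← hεB, ← hσB]
    linear_combination ε * C * t ^ 2 * hσ2
  calc |A + B * (σ * t) + C * (σ * t) ^ 2| = |ε * (A + B * (σ * t) + C * (σ * t) ^ 2)| := by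
        rw [abs_mul, hε, one_mul]
    _ = |A| + |B| * t + |C| * t ^ 2 := by rw [hsum, abs_of_nonneg (by positivity)]

theorem isGreatest_quadratic_Icc_of_le {a b d : ℝ} (hb : 0 ≤ b) (h : 2 * d ≤ b) :
    IsGreatest ((fun t => a + b * t - d * t ^ 2) '' Set.Icc 0 1) (a + b - d) := by
  refine ⟨⟨1, ⟨zero_le_one, le_rfl⟩, by ring⟩, ?_⟩
  rintro _ ⟨t, ⟨ht0, ht1⟩, rfl⟩
  have hslope : d * (1 + t) ≤ b := by
    rcases le_or_gt 0 d with hd | hd <;> nlinarith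
  nlinarith [mul_nonneg (sub_nonneg.2 ht1) (sub_nonneg.2 hslope)]

theorem isGreatest_quadratic_Icc_of_lt {a b d : ℝ} (hb : 0 ≤ b) (h : b < 2 * d) :
    IsGreatest ((fun t => a + b * t - d * t ^ 2) '' Set.Icc 0 1) (a + b ^ 2 / (4 * d)) := by
  have hd : 0 < d := by linarith
  refine ⟨⟨b / (2 * d), ⟨by positivity, (div_le_one (by positivity)).2 h.le⟩, ?_⟩, ?_⟩
  · field_simp
    ring
  · rintro _ ⟨t, -, rfl⟩
    rw [← sub_nonneg]
    have hsq : a + b ^ 2 / (4 * d) - (a + b * t - d * t ^ 2) = (b - 2 * d * t) ^ 2 / (4 * d) := by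
      field_simp
      ring
    rw [hsq]
    positivity

theorem isGreatest_radial_of_isGreatest_disk {A B C Y : ℝ} (hAC : 0 ≤ A * C)
    (hY : IsGreatest ((fun z : ℂ => ‖(A : ℂ) + (B : ℂ) * z + (C : ℂ) * z ^ 2‖ + 1 - ‖z‖ ^ 2) ''
      closedBall (0 : ℂ) 1) Y) :
    IsGreatest ((fun t => (|A| + 1) + |B| * t - (1 - |C|) * t ^ 2) '' Set.Icc 0 1) Y := by
  refine hY.image_of_le_comp (φ := fun z => ‖z‖) (fun z hz => Set.mem_Icc.2 ⟨norm_nonneg z, by simpa using hz⟩)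
    (fun z _ => ?_) ?_
  · have := norm_add_mul_add_mul_sq_le (A : ℂ) B C z
    simp only [Complex.norm_real, Real.norm_eq_abs] at this ⊢
    linarith
  · rintro _ ⟨t, ⟨ht0, ht1⟩, rfl⟩
    obtain ⟨x, hxt, hx⟩ := exists_abs_eq_abs_add_mul_add_mul_sq hAC B ht0
    refine ⟨x, by simpa [hxt] using ht1, ?_⟩
    have hcast : (A : ℂ) + B * x + C * x ^ 2 = ((A + B * x + C * x ^ 2 : ℝ) : ℂ) := by push_cast; ring
    simp only [hcast, Complex.norm_real, Real.norm_eq_abs, hx, hxt]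
    ring

theorem choi_kim_sugawa_Y (A B C Y : ℝ) (hAC : 0 ≤ A * C)
    (hY : IsGreatest
      ((fun z : ℂ => ‖(A : ℂ) + (B : ℂ) * z + (C : ℂ) * z ^ 2‖ +
        1 - ‖z‖ ^ 2) '' closedBall (0:ℂ) 1) Y) :
    (|B| ≥ 2 * (1 - |C|) → Y = |A| + |B| + |C|) ∧
    (|B| < 2 * (1 - |C|) → Y = 1 + |A| + B ^ 2 / (4 * (1 - |C|))) := by
  have hrad := isGreatest_radial_of_isGreatest_disk hAC hY
  refine ⟨fun hB => ?_, fun hB => ?_⟩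
  · rw [hrad.unique (isGreatest_quadratic_Icc_of_le (abs_nonneg B) hB)]
    ring
  · rw [hrad.unique (isGreatest_quadratic_Icc_of_lt (abs_nonneg B) hB), sq_abs]
    ring
end
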